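/- The analytic connection on the tame symbol ⟨f,g⟩ and the canonical connection of its hermitian structure coincide if and only if the globally defined imaginary 1-form r₂(f,g) = π₁(d log f)·log|g| − log|f|·π₁(d log g) vanishes identically on X. -/

import Mathlib

/-!
Since `π₁ z = i·Im z`, the metric potential is the real function `−(1/π)·Im L·log|g|`. From
`∂(Im L) = −(i/2)·L'` and `∂ log|g| = ½·g'/g`, the connection form `−(1/2πi)·L·g'/g` minus `∂ log ρ`
is `(i/2π)·(Re L·g'/g − log|g|·L')`. As `L' = f'/f` and `Re L = log|f|`, this vanishes iff
`c = (f'/f)·log|g| − log|f|·(g'/g)` does, and `r₂(f,g)(v) = π₁(c·v)` vanishes for all `v` iff `c = 0`.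
-/

noncomputable section

/-- Imaginary-part projection `π₁(z) = (z - z̄)/2`. -/
def pi1 (w : ℂ) : ℂ := (w - (starRingEnd ℂ) w) / 2

open Complex Filter Topology

theorem pi1_eq_im_mul_I (z : ℂ) : pi1 z = z.im * I := by
  rw [pi1, sub_conj]; push_cast; ring

theorem pi1_eq_zero_iff {z : ℂ} : pi1 z = 0 ↔ z.im = 0 := by
  simp [pi1_eq_im_mul_I]

theorem forall_im_mul_eq_zero_iff {c : ℂ} : (∀ v : ℂ, (c * v).im = 0) ↔ c = 0 := by
  refine ⟨fun h => Complex.ext ?_ ?_, fun h v => by simp [h]⟩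
  · simpa using h I
  · simpa using h 1

theorem forall_pi1_mul_sub_eq_zero_iff (A B : ℂ) (r s : ℝ) :
    (∀ v : ℂ, pi1 (A * v) * r - s * pi1 (B * v) = 0) ↔ A * r = s * B := by
  have key : ∀ v, pi1 (A * v) * r - s * pi1 (B * v) = pi1 ((A * r - s * B) * v) := by
    intro v
    simp only [pi1, map_mul, map_sub, conj_ofReal]
    ring
  simp_rw [key, pi1_eq_zero_iff, forall_im_mul_eq_zero_iff, sub_eq_zero]

theorem hasFDerivAt_log_norm {g : ℂ → ℂ} {g' u : ℂ} (hg : HasDerivAt g g' u) (hu : g u ≠ 0) :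
    HasFDerivAt (fun w => Real.log ‖g w‖) (reCLM.comp ((g' / g u) • (1 : ℂ →L[ℝ] ℂ))) u := by
  have hlog : HasDerivAt (fun w => log (g w / g u)) (g' / g u) u := by
    simpa [div_self hu] using (hg.div_const (g u)).clog (by simp [div_self hu, one_mem_slitPlane])
  refine ((reCLM.hasFDerivAt.comp u hlog.complexToReal_fderiv).const_add
    (Real.log ‖g u‖)).congr_of_eventuallyEq ?_
  filter_upwards [hg.continuousAt.eventually_ne hu] with w hw
  simp [log_re, Real.log_div (norm_ne_zero_iff.mpr hw) (norm_ne_zero_iff.mpr hu)]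

theorem deriv_div_eq_deriv_of_exp_eq {f L : ℂ → ℂ} {u : ℂ} (hL : DifferentiableAt ℂ L u)
    (hf : (fun w => exp (L w)) =ᶠ[𝓝 u] f) : deriv f u / f u = deriv L u := by
  rw [(hL.hasDerivAt.cexp.congr_of_eventuallyEq hf.symm).deriv, ← hf.eq_of_nhds]
  field_simp [exp_ne_zero]

theorem neg_one_div_pi_mul_I_mul_pi1 (z : ℂ) (t : ℝ) :
    -(1 / (Real.pi * I)) * pi1 z * t = ((-Real.pi⁻¹ * (z.im * t) : ℝ) : ℂ) := by
  rw [pi1_eq_im_mul_I]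
  have hπ : (Real.pi : ℂ) ≠ 0 := ofReal_ne_zero.mpr Real.pi_ne_zero
  push_cast
  field_simp

/-- The `(1,0)`-part `∂h` of the real differential of `h` at `u`. -/
def dPartial (h : ℂ → ℂ) (u v : ℂ) : ℂ := 1 / 2 * (fderiv ℝ h u v - I * fderiv ℝ h u (I * v))

/-- The local metric potential `log ρ` of the tame symbol, for a branch `L` of `log f`. -/
def tameLogMetric (L g : ℂ → ℂ) (w : ℂ) : ℂ := -(1 / (Real.pi * I)) * pi1 (L w) * (Real.log ‖g w‖ : ℂ)

theorem hasFDerivAt_im_mul_log_norm {L g : ℂ → ℂ} {A g' u : ℂ} (hL : HasDerivAt L A u)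
    (hg : HasDerivAt g g' u) (hu : g u ≠ 0) :
    HasFDerivAt (fun w => (L w).im * Real.log ‖g w‖)
      ((L u).im • reCLM.comp ((g' / g u) • (1 : ℂ →L[ℝ] ℂ))
        + Real.log ‖g u‖ • imCLM.comp (A • (1 : ℂ →L[ℝ] ℂ))) u :=
  (imCLM.hasFDerivAt.comp u hL.complexToReal_fderiv).mul (hasFDerivAt_log_norm hg hu)

theorem fderiv_tameLogMetric_apply {L g : ℂ → ℂ} {A g' u : ℂ} (hL : HasDerivAt L A u)
    (hg : HasDerivAt g g' u) (hu : g u ≠ 0) (v : ℂ) :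
    fderiv ℝ (tameLogMetric L g) u v
      = ((-Real.pi⁻¹ * ((L u).im * (g' / g u * v).re + Real.log ‖g u‖ * (A * v).im) : ℝ) : ℂ) := by
  have h := ofRealCLM.hasFDerivAt.comp u
    ((hasFDerivAt_im_mul_log_norm hL hg hu).const_mul (-Real.pi⁻¹))
  rw [show tameLogMetric L g = ofRealCLM ∘ fun w => -Real.pi⁻¹ * ((L w).im * Real.log ‖g w‖) from
    funext fun w => neg_one_div_pi_mul_I_mul_pi1 _ _, h.fderiv]
  simp only [ContinuousLinearMap.comp_apply, ofRealCLM_apply, smul_apply, add_apply, reCLM_apply,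
    imCLM_apply, one_apply_eq_self, smul_eq_mul]

theorem dPartial_tameLogMetric {L g : ℂ → ℂ} {A g' u : ℂ} (hL : HasDerivAt L A u)
    (hg : HasDerivAt g g' u) (hu : g u ≠ 0) (v : ℂ) :
    dPartial (tameLogMetric L g) u v
      = (I * Real.log ‖g u‖ * (A * v) - (L u).im * (g' / g u * v)) / (2 * Real.pi) := by
  simp only [dPartial, fderiv_tameLogMetric_apply hL hg hu, mul_left_comm _ I, I_mul_re, I_mul_im]
  push_cast
  linear_combination (-(L u).im * re_add_im (g' / g u * v) + I * Real.log ‖g u‖ * re_add_im (A * v)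
    - Real.log ‖g u‖ * (A * v).im * I_sq) / (2 * Real.pi)

theorem connection_eq_dPartial_tameLogMetric_iff {L g : ℂ → ℂ} {A g' u : ℂ}
    (hL : HasDerivAt L A u) (hg : HasDerivAt g g' u) (hu : g u ≠ 0) :
    (∀ v : ℂ, -(1 / (2 * Real.pi * I)) * L u * (g' / g u) * v = dPartial (tameLogMetric L g) u v)
      ↔ A * Real.log ‖g u‖ = (L u).re * (g' / g u) := by
  have hdiff : ∀ v : ℂ, -(1 / (2 * Real.pi * I)) * L u * (g' / g u) * v
      - (I * Real.log ‖g u‖ * (A * v) - (L u).im * (g' / g u * v)) / (2 * Real.pi)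
      = -(I / (2 * Real.pi)) * ((A * Real.log ‖g u‖ - (L u).re * (g' / g u)) * v) := by
    intro v
    rw [one_div, mul_inv, inv_I]
    linear_combination g' / g u * v * (-I * re_add_im (L u) + (L u).im * I_sq) / (2 * Real.pi)
  have hk : -(I / (2 * Real.pi)) ≠ 0 := by simp [Real.pi_ne_zero]
  calc (∀ v : ℂ, _ = dPartial (tameLogMetric L g) u v)
      ↔ ∀ v : ℂ, (A * Real.log ‖g u‖ - (L u).re * (g' / g u)) * v = 0 := forall_congr' fun v => by
        rw [dPartial_tameLogMetric hL hg hu, ← sub_eq_zero, hdiff, mul_eq_zero, or_iff_right hk]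
    _ ↔ A * Real.log ‖g u‖ = (L u).re * (g' / g u) :=
        ⟨fun h => by simpa [sub_eq_zero] using h 1, fun h v => by simp [sub_eq_zero.mpr h]⟩

theorem stmt11_general (U : Set ℂ) (hU : IsOpen U) (f g L : ℂ → ℂ)
    (hg0 : ∀ u ∈ U, g u ≠ 0)
    (hL : ∀ u ∈ U, Complex.exp (L u) = f u)
    (hLd : DifferentiableOn ℂ L U) (hgd : DifferentiableOn ℂ g U) :
    (∀ u ∈ U, ∀ v : ℂ,
        -(1 / (2 * Real.pi * Complex.I)) * L u * (deriv g u / g u) * v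
          = (1 / 2) *
            (fderiv ℝ (fun w =>
                -(1 / (Real.pi * Complex.I)) * pi1 (L w)
                  * (Real.log (‖g w‖) : ℂ)) u v
              - Complex.I * fderiv ℝ (fun w =>
                -(1 / (Real.pi * Complex.I)) * pi1 (L w)
                  * (Real.log (‖g w‖) : ℂ)) u (Complex.I * v)))
    ↔ (∀ u ∈ U, ∀ v : ℂ,
        pi1 (deriv f u / f u * v) * (Real.log (‖g u‖) : ℂ)
          - (Real.log (‖f u‖) : ℂ) * pi1 (deriv g u / g u * v) = 0) := by
  refine forall₂_congr fun u hu => ?_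
  have hUu : U ∈ 𝓝 u := hU.mem_nhds hu
  have hLu : DifferentiableAt ℂ L u := (hLd u hu).differentiableAt hUu
  have hexp : (fun w => exp (L w)) =ᶠ[𝓝 u] f := eventually_of_mem hUu hL
  refine (connection_eq_dPartial_tameLogMetric_iff hLu.hasDerivAt
    ((hgd u hu).differentiableAt hUu).hasDerivAt (hg0 u hu)).trans ?_
  rw [forall_pi1_mul_sub_eq_zero_iff, deriv_div_eq_deriv_of_exp_eq hLu hexp, ← hL u hu, norm_exp,
    Real.log_exp]

/-- Proposition 4.6 of the paper: on an open set `U` where `f, g` are invertible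
holomorphic and `L` is a branch of `log f`, the analytic connection of the tame
symbol `⟨f,g⟩`, locally `−(1/2πi)·L·dg/g`, coincides with the canonical connection
`∂ log ρ` of its hermitian structure `log ρ = −(1/πi)·π₁(L)·log|g|`
(here `∂h(v) = (1/2)(dh(v) − i·dh(iv))`), if and only if the globally defined
imaginary 1-form `r₂(f,g) = π₁(d log f)·log|g| − log|f|·π₁(d log g)` vanishes
identically. -/
theorem stmt11 (U : Set ℂ) (hU : IsOpen U) (f g L : ℂ → ℂ)
    (hf0 : ∀ u ∈ U, f u ≠ 0) (hg0 : ∀ u ∈ U, g u ≠ 0)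
    (hL : ∀ u ∈ U, Complex.exp (L u) = f u)
    (hLd : DifferentiableOn ℂ L U) (hgd : DifferentiableOn ℂ g U)
    (hfd : DifferentiableOn ℂ f U) :
    (∀ u ∈ U, ∀ v : ℂ,
        -(1 / (2 * Real.pi * Complex.I)) * L u * (deriv g u / g u) * v
          = (1 / 2) *
            (fderiv ℝ (fun w =>
                -(1 / (Real.pi * Complex.I)) * pi1 (L w)
                  * (Real.log (‖g w‖) : ℂ)) u v
              - Complex.I * fderiv ℝ (fun w =>
                -(1 / (Real.pi * Complex.I)) * pi1 (L w)
                  * (Real.log (‖g w‖) : ℂ)) u (Complex.I * v)))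
    ↔ (∀ u ∈ U, ∀ v : ℂ,
        pi1 (deriv f u / f u * v) * (Real.log (‖g u‖) : ℂ)
          - (Real.log (‖f u‖) : ℂ) * pi1 (deriv g u / g u * v) = 0) :=
  stmt11_general U hU f g L hg0 hL hLd hgd

end
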